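/- Let < be a total order on W and define the edge-minimal rooted k-contraction with edges R'_i = {([x]_{b(x)}, [least-(b(x)−1)-representative of y]'s class) | x ∈ maxRepr(W), x R_i y, b(x) > 0}, where the least h-representative of w is the <-least element of {v ∈ maxRepr(W) | v ∼_h w}. Then this contraction is k-bisimilar to the original model M. -/

import Mathlib

/-- A finite pointed Kripke model with modality indices `I` and atoms `P`. -/
structure PModel (I P : Type) where
  W : Type
  fin : Finite W
  R : I → W → W → Prop
  V : P → W → Prop
  d : W

variable {I P : Type}

/-- `h`-bisimilarity between worlds of two models (back-and-forth to depth `h`). -/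
def Bisim (M N : PModel I P) : ℕ → M.W → N.W → Prop
  | 0, w, v => ∀ p, M.V p w ↔ N.V p v
  | h+1, w, v => (∀ p, M.V p w ↔ N.V p v)
      ∧ (∀ i w', M.R i w w' → ∃ v', N.R i v v' ∧ Bisim M N h w' v')
      ∧ (∀ i v', N.R i v v' → ∃ w', M.R i w w' ∧ Bisim M N h w' v')

/-- `k`-bisimilarity of pointed models. -/
def PBisim (k : ℕ) (M N : PModel I P) : Prop := Bisim M N k M.d N.d

/-- Directed paths of length `n`. -/
def Steps (M : PModel I P) : ℕ → M.W → M.W → Prop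
  | 0, w, v => w = v
  | n+1, w, v => ∃ u i, M.R i w u ∧ Steps M n u v

/-- Depth of a world: length of a shortest path from the designated world (`⊤` if none). -/
noncomputable def depth (M : PModel I P) (w : M.W) : ℕ∞ :=
  sInf {n : ℕ∞ | ∃ m : ℕ, n = (m : ℕ∞) ∧ Steps M m M.d w}

/-- Bound `b(w) = k − d(w)`, with `⊥` for unreachable worlds. -/
noncomputable def bound (k : ℕ) (M : PModel I P) (w : M.W) : WithBot ℤ :=
  ENat.recTopCoe (⊥ : WithBot ℤ) (fun n : ℕ => (((k : ℤ) - n : ℤ) : WithBot ℤ)) (depth M w)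

/-- The bound as a natural number (meaningful when `0 ≤ bound k M w`). -/
noncomputable def nbound (k : ℕ) (M : PModel I P) (w : M.W) : ℕ :=
  k - (depth M w).toNat
/-- `x` represents `y` : `b(x) ≥ b(y) ≥ 0` and `x ∼_{b(y)} y`. -/
noncomputable def Repr' (k : ℕ) (M : PModel I P) (x y : M.W) : Prop :=
  0 ≤ bound k M y ∧ bound k M y ≤ bound k M x ∧ Bisim M M (nbound k M y) x y

/-- `x` strictly represents `y`. -/
noncomputable def SRepr (k : ℕ) (M : PModel I P) (x y : M.W) : Prop :=
  Repr' k M x y ∧ bound k M y < bound k M x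

/-- Maximal representatives. -/
noncomputable def maxRepr (k : ℕ) (M : PModel I P) : Set M.W :=
  {x | 0 ≤ bound k M x ∧ ∀ y, ¬ SRepr k M y x}

/-- Representative class `[x]_{b(x)}`. -/
noncomputable def reprClass (k : ℕ) (M : PModel I P) (x : M.W) : Set M.W :=
  {y | Bisim M M (nbound k M x) x y}

lemma depth_d (M : PModel I P) : depth M M.d = 0 := by
  have h0 : (0 : ℕ∞) ∈ {n : ℕ∞ | ∃ m : ℕ, n = (m : ℕ∞) ∧ Steps M m M.d M.d} :=
    ⟨0, by simp, rfl⟩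
  have := sInf_le h0
  simpa [depth, le_zero_iff] using this

lemma bound_d (k : ℕ) (M : PModel I P) : bound k M M.d = ((k : ℤ) : WithBot ℤ) := by
  have h := depth_d M
  simp only [bound, h, ENat.recTopCoe_zero]
  norm_num

lemma bound_le (k : ℕ) (M : PModel I P) (w : M.W) : bound k M w ≤ ((k : ℤ) : WithBot ℤ) := by
  simp only [bound]
  by_cases hd : depth M w = ⊤
  · simp [hd]
  · lift depth M w to ℕ using hd with n hn
    simp only [ENat.recTopCoe_coe]
    exact_mod_cast (by omega : (k : ℤ) - n ≤ (k:ℤ))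

lemma d_mem_maxRepr (k : ℕ) (M : PModel I P) : M.d ∈ maxRepr k M := by
  constructor
  · rw [bound_d]; exact_mod_cast Int.ofNat_nonneg k
  · rintro y ⟨_, hlt⟩
    exact absurd (lt_of_lt_of_le hlt (bound_le k M y)) (by rw [bound_d]; exact lt_irrefl _)

/-- Carrier of the rooted k-contraction: representative classes of maximal representatives. -/
def ContrW (k : ℕ) (M : PModel I P) : Type :=
  {S : Set M.W // ∃ x ∈ maxRepr k M, S = reprClass k M x}

instance (k : ℕ) (M : PModel I P) : Finite (ContrW k M) := by
  have := M.fin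
  exact Subtype.finite

/-- The rooted `k`-contraction. -/
noncomputable def rootedContraction (k : ℕ) (M : PModel I P) : PModel I P where
  W := ContrW k M
  fin := inferInstance
  R := fun i S T => ∃ x ∈ maxRepr k M, ∃ y ∈ maxRepr k M,
        S.1 = reprClass k M x ∧ T.1 = reprClass k M y ∧
        0 < bound k M x ∧ ∃ z, M.R i x z ∧ Bisim M M (nbound k M x - 1) y z
  V := fun p S => ∃ x ∈ maxRepr k M, S.1 = reprClass k M x ∧ M.V p x
  d := ⟨reprClass k M M.d, M.d, d_mem_maxRepr k M, rfl⟩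

/-- The edge-minimal rooted `k`-contraction with respect to a total order `r` on worlds:
edges go to the class of the `<`-least maximal representative `(b(x)-1)`-bisimilar to the
successor. -/
noncomputable def minContraction (k : ℕ) (M : PModel I P) (r : LinearOrder M.W) :
    PModel I P where
  W := ContrW k M
  fin := inferInstance
  R := fun i S T => ∃ x ∈ maxRepr k M, ∃ y : M.W, M.R i x y ∧ 0 < bound k M x ∧
        S.1 = reprClass k M x ∧
        ∃ y' ∈ maxRepr k M,
          (Bisim M M (nbound k M x - 1) y' y ∧
            ∀ v ∈ maxRepr k M, Bisim M M (nbound k M x - 1) v y → r.le y' v) ∧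
          T.1 = reprClass k M y'
  V := fun p S => ∃ x ∈ maxRepr k M, S.1 = reprClass k M x ∧ M.V p x
  d := ⟨reprClass k M M.d, M.d, d_mem_maxRepr k M, rfl⟩

/-!
For a maximal representative `x`, induction on `h ≤ b(x)` shows that every world `w` with
`x ∼_h w` is `h`-bisimilar to `[x]_{b(x)}`. What makes the induction go through is that a
maximal representative `y` with `y ∼_m z` and `m ≤ b(z)` satisfies `m ≤ b(y)`: otherwise a
maximal representative of `z` would strictly represent `y`. Hence the `<`-least
representative chosen by an edge is still bisimilar deeply enough for the induction
hypothesis, and any maximal representative of `[x]_{b(x)}` can stand in for `x`.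
-/

namespace Bisim

theorem refl (M : PModel I P) : ∀ h (w : M.W), Bisim M M h w w
  | 0, _ => fun _ => Iff.rfl
  | h + 1, _ => ⟨fun _ => Iff.rfl, fun _ w' hr => ⟨w', hr, refl M h w'⟩,
      fun _ v' hr => ⟨v', hr, refl M h v'⟩⟩

variable {M N O : PModel I P}

theorem atoms_iff : ∀ {h} {w : M.W} {v : N.W}, Bisim M N h w v → ∀ p, M.V p w ↔ N.V p v
  | 0, _, _, hb => hb
  | _ + 1, _, _, hb => hb.1

theorem symm : ∀ {h} {w : M.W} {v : N.W}, Bisim M N h w v → Bisim N M h v w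
  | 0, _, _, hb => fun p => (hb p).symm
  | _ + 1, _, _, ⟨ha, hf, hb⟩ => ⟨fun p => (ha p).symm,
      fun i v' hr => (hb i v' hr).imp fun _ ⟨hw', hb'⟩ => ⟨hw', hb'.symm⟩,
      fun i w' hr => (hf i w' hr).imp fun _ ⟨hv', hb'⟩ => ⟨hv', hb'.symm⟩⟩

theorem trans : ∀ {h} {w : M.W} {v : N.W} {u : O.W},
    Bisim M N h w v → Bisim N O h v u → Bisim M O h w u
  | 0, _, _, _, h₁, h₂ => fun p => (h₁ p).trans (h₂ p)
  | _ + 1, _, _, _, ⟨ha₁, hf₁, hb₁⟩, ⟨ha₂, hf₂, hb₂⟩ =>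
    ⟨fun p => (ha₁ p).trans (ha₂ p),
      fun i w' hr =>
        let ⟨v', hv', h₁'⟩ := hf₁ i w' hr
        (hf₂ i v' hv').imp fun _ ⟨hu', h₂'⟩ => ⟨hu', h₁'.trans h₂'⟩,
      fun i u' hr =>
        let ⟨v', hv', h₂'⟩ := hb₂ i u' hr
        (hb₁ i v' hv').imp fun _ ⟨hw', h₁'⟩ => ⟨hw', h₁'.trans h₂'⟩⟩

theorem mono : ∀ {h h'} {w : M.W} {v : N.W}, h' ≤ h → Bisim M N h w v → Bisim M N h' w v
  | _, 0, _, _, _, hb => hb.atoms_iff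
  | 0, _ + 1, _, _, hle, _ => absurd hle (by omega)
  | _ + 1, _ + 1, _, _, hle, ⟨ha, hf, hb⟩ => ⟨ha,
      fun i w' hr => (hf i w' hr).imp fun _ ⟨hv', hb'⟩ => ⟨hv', hb'.mono (by omega)⟩,
      fun i v' hr => (hb i v' hr).imp fun _ ⟨hw', hb'⟩ => ⟨hw', hb'.mono (by omega)⟩⟩

end Bisim

section Bounds

variable {k : ℕ} {M : PModel I P}

theorem Steps.snoc {i : I} {x z : M.W} (hr : M.R i x z) :
    ∀ {m : ℕ} {w : M.W}, Steps M m w x → Steps M (m + 1) w z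
  | 0, _, rfl => ⟨z, i, hr, rfl⟩
  | _ + 1, _, ⟨u, j, hu, hs⟩ => ⟨u, j, hu, Steps.snoc hr hs⟩

theorem steps_of_depth_eq {w : M.W} {n : ℕ} (h : depth M w = n) : Steps M n M.d w := by
  set S := {a : ℕ∞ | ∃ m : ℕ, a = m ∧ Steps M m M.d w}
  have hS : S.Nonempty := by
    by_contra hempty
    simp [depth, S, Set.not_nonempty_iff_eq_empty.mp hempty] at h
  obtain ⟨m, hm, hs⟩ := csInf_mem hS
  rwa [← Nat.cast_inj.mp (hm.symm.trans h)]

theorem depth_le_depth_add_one {i : I} {x z : M.W} (hr : M.R i x z) :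
    depth M z ≤ depth M x + 1 := by
  cases hx : depth M x with
  | top => simp
  | coe n => exact sInf_le ⟨n + 1, by simp, (steps_of_depth_eq hx).snoc hr⟩

theorem bound_of_depth_eq {w : M.W} {n : ℕ} (h : depth M w = n) :
    bound k M w = (((k : ℤ) - n : ℤ) : WithBot ℤ) := by
  simp [bound, h]

theorem nbound_of_depth_eq {w : M.W} {n : ℕ} (h : depth M w = n) : nbound k M w = k - n := by
  simp [nbound, h]

theorem exists_depth_eq_of_bound_nonneg {w : M.W} (h : 0 ≤ bound k M w) :
    ∃ n ≤ k, depth M w = n := by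
  cases hw : depth M w with
  | top => simp [bound, hw] at h
  | coe n =>
    rw [bound_of_depth_eq hw] at h
    have : (0 : ℤ) ≤ k - n := by exact_mod_cast h
    exact ⟨n, by omega, rfl⟩

theorem bound_eq_nbound {w : M.W} (h : 0 ≤ bound k M w) :
    bound k M w = ((nbound k M w : ℤ) : WithBot ℤ) := by
  obtain ⟨n, hnk, hn⟩ := exists_depth_eq_of_bound_nonneg h
  rw [bound_of_depth_eq hn, nbound_of_depth_eq hn]
  exact_mod_cast (by omega : (k : ℤ) - n = ((k - n : ℕ) : ℤ))

theorem nbound_le_nbound_iff {w v : M.W} (hw : 0 ≤ bound k M w) (hv : 0 ≤ bound k M v) :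
    nbound k M w ≤ nbound k M v ↔ bound k M w ≤ bound k M v := by
  rw [bound_eq_nbound hw, bound_eq_nbound hv]
  norm_cast

theorem nbound_lt_nbound_iff {w v : M.W} (hw : 0 ≤ bound k M w) (hv : 0 ≤ bound k M v) :
    nbound k M w < nbound k M v ↔ bound k M w < bound k M v := by
  rw [bound_eq_nbound hw, bound_eq_nbound hv]
  norm_cast

theorem bound_pos_iff {w : M.W} (h : 0 ≤ bound k M w) : 0 < bound k M w ↔ 0 < nbound k M w := by
  rw [bound_eq_nbound h]
  norm_cast

theorem bound_nonneg_and_nbound_pred_le_of_R {i : I} {x z : M.W} (hx : 0 < bound k M x)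
    (hr : M.R i x z) : 0 ≤ bound k M z ∧ nbound k M x - 1 ≤ nbound k M z := by
  obtain ⟨n, -, hn⟩ := exists_depth_eq_of_bound_nonneg hx.le
  have hnk : n < k := by
    rw [bound_of_depth_eq hn] at hx
    have : (0 : ℤ) < k - n := by exact_mod_cast hx
    omega
  have hz : depth M z ≤ (n + 1 : ℕ) := by simpa [hn] using depth_le_depth_add_one hr
  obtain ⟨m, hm, hmn⟩ := ENat.le_natCast_iff.mp hz
  rw [bound_of_depth_eq hm, nbound_of_depth_eq hm, nbound_of_depth_eq hn]
  exact ⟨by exact_mod_cast (by omega : (0 : ℤ) ≤ k - m), by omega⟩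

theorem nbound_d : nbound k M M.d = k := by
  simp [nbound, depth_d]

end Bounds

section Representatives

variable {k : ℕ} {M : PModel I P}

theorem exists_maxRepr {w : M.W} (hw : 0 ≤ bound k M w) :
    ∃ x ∈ maxRepr k M, bound k M w ≤ bound k M x ∧ Bisim M M (nbound k M w) x w := by
  have := M.fin
  obtain ⟨x, ⟨hwx, hxw⟩, hmax⟩ := Set.exists_max_image
    {v | bound k M w ≤ bound k M v ∧ Bisim M M (nbound k M w) v w} (bound k M)
    (Set.toFinite _) ⟨w, le_rfl, Bisim.refl M _ w⟩
  refine ⟨x, ⟨hw.trans hwx, ?_⟩, hwx, hxw⟩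
  rintro y ⟨⟨-, hxy, hyx⟩, hlt⟩
  have hyw : Bisim M M (nbound k M w) y w :=
    (hyx.mono ((nbound_le_nbound_iff hw (hw.trans hwx)).mpr hwx)).trans hxw
  exact (hmax y ⟨hwx.trans hxy, hyw⟩).not_gt hlt

theorem le_nbound_of_bisim_maxRepr {y z : M.W} {m : ℕ} (hy : y ∈ maxRepr k M)
    (hz : 0 ≤ bound k M z) (hm : m ≤ nbound k M z) (hyz : Bisim M M m y z) :
    m ≤ nbound k M y := by
  by_contra! hlt
  obtain ⟨y', hy', hzy', hy'z⟩ := exists_maxRepr hz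
  have hy'0 : 0 ≤ bound k M y' := hz.trans hzy'
  have hnb : nbound k M y < nbound k M y' :=
    hlt.trans_le (hm.trans ((nbound_le_nbound_iff hz hy'0).mpr hzy'))
  have hb : bound k M y < bound k M y' := (nbound_lt_nbound_iff hy.1 hy'0).mp hnb
  exact hy.2 y' ⟨⟨hy.1, hb.le, ((hy'z.mono hm).trans hyz.symm).mono hlt.le⟩, hb⟩

theorem exists_minRepr (r : LinearOrder M.W) {z : M.W} {m : ℕ} (hz : 0 ≤ bound k M z)
    (hm : m ≤ nbound k M z) :
    ∃ y ∈ maxRepr k M, Bisim M M m y z ∧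
      ∀ v ∈ maxRepr k M, Bisim M M m v z → r.le y v := by
  have := M.fin
  obtain ⟨y', hy', -, hy'z⟩ := exists_maxRepr hz
  obtain ⟨y, ⟨hy, hyz⟩, hmin⟩ := @Set.exists_min_image _ _ r
    {v | v ∈ maxRepr k M ∧ Bisim M M m v z} id (Set.toFinite _) ⟨y', hy', hy'z.mono hm⟩
  exact ⟨y, hy, hyz, fun v hv hvz => hmin v ⟨hv, hvz⟩⟩

theorem bisim_of_reprClass_eq {x x' : M.W} (h : reprClass k M x = reprClass k M x') :
    Bisim M M (nbound k M x) x x' := by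
  have hx' : x' ∈ reprClass k M x' := Bisim.refl M _ x'
  rwa [← h] at hx'

end Representatives

section Contraction

variable {k : ℕ} {M : PModel I P} (r : LinearOrder M.W)

theorem minContraction_V_iff {x : M.W} {S : (minContraction k M r).W} (hx : x ∈ maxRepr k M)
    (hS : S.1 = reprClass k M x) (p : P) : (minContraction k M r).V p S ↔ M.V p x := by
  refine ⟨?_, fun hp => ⟨x, hx, hS, hp⟩⟩
  rintro ⟨x', -, hS', hp⟩
  exact ((bisim_of_reprClass_eq (hS.symm.trans hS')).atoms_iff p).mpr hp

theorem bisim_minContraction (h : ℕ) {x w : M.W} (hx : x ∈ maxRepr k M)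
    (hh : h ≤ nbound k M x) (hxw : Bisim M M h x w) {S : (minContraction k M r).W}
    (hS : S.1 = reprClass k M x) : Bisim M (minContraction k M r) h w S := by
  induction h generalizing x w S with
  | zero => exact fun p => (hxw.atoms_iff p).symm.trans (minContraction_V_iff r hx hS p).symm
  | succ h ih =>
    have hx0 : 0 < bound k M x := (bound_pos_iff hx.1).mpr (by omega)
    refine ⟨fun p => (hxw.atoms_iff p).symm.trans (minContraction_V_iff r hx hS p).symm,
      ?forth, ?back⟩
    case forth =>
      intro i w' hww'
      obtain ⟨z, hxz, hzw'⟩ := hxw.2.2 i w' hww'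
      obtain ⟨hz, hxz_nb⟩ := bound_nonneg_and_nbound_pred_le_of_R hx0 hxz
      obtain ⟨y, hy, hyz, hy_min⟩ := exists_minRepr r hz hxz_nb
      refine ⟨⟨reprClass k M y, y, hy, rfl⟩,
        ⟨x, hx, z, hxz, hx0, hS, y, hy, ⟨hyz, hy_min⟩, rfl⟩, ?_⟩
      have hyz' : Bisim M M h y z := hyz.mono (by omega)
      exact ih hy (le_nbound_of_bisim_maxRepr hy hz (by omega) hyz') (hyz'.trans hzw') rfl
    case back =>
      rintro i T ⟨x', hx', y, hx'y, hx'0, hSx', y', hy', ⟨hy'y, -⟩, hT⟩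
      have hxx' : Bisim M M (nbound k M x) x x' := bisim_of_reprClass_eq (hS.symm.trans hSx')
      have hnx' : nbound k M x ≤ nbound k M x' :=
        le_nbound_of_bisim_maxRepr hx' hx.1 le_rfl hxx'.symm
      obtain ⟨w', hww', hyw'⟩ := ((hxx'.mono hh).symm.trans hxw).2.1 i y hx'y
      obtain ⟨hy0, hx'y_nb⟩ := bound_nonneg_and_nbound_pred_le_of_R hx'0 hx'y
      have hny' : nbound k M x' - 1 ≤ nbound k M y' :=
        le_nbound_of_bisim_maxRepr hy' hy0 hx'y_nb hy'y
      exact ⟨w', hww', ih hy' (by omega) ((hy'y.mono (by omega)).trans hyw') hT⟩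

end Contraction

/-- The edge-minimal rooted `k`-contraction is `k`-bisimilar to the original model. -/
theorem minContraction_k_bisim (k : ℕ) (M : PModel I P) (r : LinearOrder M.W) :
    PBisim k M (minContraction k M r) :=
  bisim_minContraction r k (d_mem_maxRepr k M) nbound_d.ge (Bisim.refl M k M.d) rfl
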